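/- Let F be a finite nonempty set, x : F → ℝ≥0 with Σ_{i∈F} x_i ≥ 1, c : F → ℝ≥0, and α ∈ (0,1). Let c* = Σ_{i∈F} c_i x_i, and let q be the smallest value t ∈ {c_i : i ∈ F} such that Σ_{i : c_i ≤ t} x_i ≥ α (such t exists since α < 1 ≤ Σ x). Then q ≤ c*/(1−α). -/
import Mathlib


/-- The neighborhood distance `q` (the smallest value of `c` capturing a fraction
at least `α` of the fractional assignment `x`) is at most `c* / (1 - α)`, where
`c* = ∑ i, c i * x i` is the fractional service cost. -/
theorem stmt_2 {F : Type*} [Fintype F] [Nonempty F]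
    (x c : F → ℝ) (α q : ℝ)
    (hx : ∀ i, 0 ≤ x i) (hxsum : 1 ≤ ∑ i, x i) (hc : ∀ i, 0 ≤ c i)
    (hα0 : 0 < α) (hα1 : α < 1)
    (hq_mem : ∃ i, c i = q)
    (hq : α ≤ ∑ i ∈ Finset.univ.filter (fun i => c i ≤ q), x i)
    (hq_min : ∀ t : ℝ, (∃ i, c i = t) →
      α ≤ ∑ i ∈ Finset.univ.filter (fun i => c i ≤ t), x i → q ≤ t) :
    q ≤ (∑ i, c i * x i) / (1 - α) := by
  classical
  obtain ⟨i₀, hi₀⟩ := hq_mem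
  have hq0 : 0 ≤ q := hi₀ ▸ hc i₀
  set S : Finset F := Finset.univ.filter (fun i => c i < q) with hS
  -- mass below q is < α
  have hSlt : ∑ i ∈ S, x i < α := by
    rcases S.eq_empty_or_nonempty with h | h
    · simp [h, hα0]
    · have himg : (S.image c).Nonempty := h.image c
      set t := (S.image c).max' himg with ht
      have ht_mem : t ∈ S.image c := (S.image c).max'_mem himg
      obtain ⟨j, hjS, hjt⟩ := Finset.mem_image.mp ht_mem
      have htq : t < q := by
        rw [← hjt]; exact (Finset.mem_filter.mp hjS).2
      have hSeq : S = Finset.univ.filter (fun i => c i ≤ t) := by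
        ext i
        simp only [hS, Finset.mem_filter, Finset.mem_univ, true_and]
        constructor
        · intro hi
          exact (S.image c).le_max' _ (Finset.mem_image.mpr ⟨i, by
            simp [hS, hi], rfl⟩)
        · intro hi
          exact lt_of_le_of_lt hi htq
      by_contra hcon
      push_neg at hcon
      have : q ≤ t := hq_min t ⟨j, hjt⟩ (by rw [← hSeq]; exact hcon)
      linarith
  -- mass at ≥ q exceeds 1 - α
  set T : Finset F := Finset.univ.filter (fun i => q ≤ c i) with hT
  have hTS : ∑ i ∈ T, x i + ∑ i ∈ S, x i = ∑ i, x i := by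
    rw [hT, hS]
    rw [← Finset.sum_filter_add_sum_filter_not Finset.univ (fun i => q ≤ c i) x]
    congr 1
    apply Finset.sum_congr _ (fun _ _ => rfl)
    ext i; simp [not_le]
  have hTge : 1 - α < ∑ i ∈ T, x i := by
    have := hxsum
    linarith
  -- Markov bound
  have hmain : q * (1 - α) ≤ ∑ i, c i * x i := by
    calc q * (1 - α) ≤ q * ∑ i ∈ T, x i := by
          apply mul_le_mul_of_nonneg_left (le_of_lt hTge) hq0
      _ = ∑ i ∈ T, q * x i := Finset.mul_sum _ _ _
      _ ≤ ∑ i ∈ T, c i * x i := by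
          apply Finset.sum_le_sum
          intro i hi
          exact mul_le_mul_of_nonneg_right (Finset.mem_filter.mp hi).2 (hx i)
      _ ≤ ∑ i, c i * x i := by
          apply Finset.sum_le_sum_of_subset_of_nonneg (Finset.subset_univ T)
          intro i _ _
          exact mul_nonneg (hc i) (hx i)
  have h1α : 0 < 1 - α := by linarith
  rw [le_div_iff₀ h1α]
  linarith
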